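/- Let G be a finite simple graph with m edges. The first Zagreb index of the line graph L(G) satisfies M₁(L(G)) = F(G) - 4·M₁(G) + 2·M₂(G) + 4m. -/

import Mathlib

open SimpleGraph Finset
open scoped Classical

noncomputable section
namespace Paper

variable {V : Type*} [Fintype V]

/-- Degree as an integer. -/
def d (G : SimpleGraph V) (v : V) : ℤ := G.degree v

/-- Number of edges. -/
def m (G : SimpleGraph V) : ℤ := G.edgeFinset.card

/-- Sum over unordered edges of a symmetric vertex-pair function. -/
def edgeSum (G : SimpleGraph V) (f : V → V → ℤ) (hf : ∀ u v, f u v = f v u) : ℤ :=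
  ∑ e ∈ G.edgeFinset, Sym2.lift ⟨f, hf⟩ e

/-- First Zagreb index. -/
def M1 (G : SimpleGraph V) : ℤ := ∑ v, d G v ^ 2

/-- Second Zagreb index. -/
def M2 (G : SimpleGraph V) : ℤ :=
  edgeSum G (fun u v => d G u * d G v) (by intros; ring)

/-- F-index. -/
def F (G : SimpleGraph V) : ℤ := ∑ v, d G v ^ 3

/-- ξ₄. -/
def xi4 (G : SimpleGraph V) : ℤ := ∑ v, d G v ^ 4

/-- Redefined third Zagreb index. -/
def ReZG3 (G : SimpleGraph V) : ℤ :=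
  edgeSum G (fun u v => d G u * d G v * (d G u + d G v)) (by intros; ring)

/-- F-coindex: sum over edges of the complement with degrees in G. -/
def Fbar (G : SimpleGraph V) : ℤ :=
  edgeSum Gᶜ (fun u v => d G u ^ 2 + d G v ^ 2) (by intros; ring)

/-- Subdivision graph. -/
def subdivision (G : SimpleGraph V) : SimpleGraph (V ⊕ G.edgeSet) where
  Adj x y :=
    match x, y with
    | Sum.inl u, Sum.inr e => u ∈ (e : Sym2 V)
    | Sum.inr e, Sum.inl u => u ∈ (e : Sym2 V)
    | _, _ => False
  symm := by constructor; rintro (u | e) (v | f) h <;> first | exact h | exact h.elim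
  loopless := by constructor; rintro (u | e) <;> simp

/-- Vertex-semitotal graph. -/
def vertexSemitotal (G : SimpleGraph V) : SimpleGraph (V ⊕ G.edgeSet) where
  Adj x y :=
    match x, y with
    | Sum.inl u, Sum.inl v => G.Adj u v
    | Sum.inl u, Sum.inr e => u ∈ (e : Sym2 V)
    | Sum.inr e, Sum.inl u => u ∈ (e : Sym2 V)
    | _, _ => False
  symm := by
    constructor
    rintro (u | e) (v | f) h
    · exact G.symm.symm _ _ h
    · exact h
    · exact h
    · exact h.elim
  loopless := by
    constructor
    rintro (u | e) h
    · exact G.loopless.irrefl u h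
    · exact h

/-- Edge-semitotal graph. -/
def edgeSemitotal (G : SimpleGraph V) : SimpleGraph (V ⊕ G.edgeSet) where
  Adj x y :=
    match x, y with
    | Sum.inl u, Sum.inr e => u ∈ (e : Sym2 V)
    | Sum.inr e, Sum.inl u => u ∈ (e : Sym2 V)
    | Sum.inr e, Sum.inr f => e ≠ f ∧ ∃ v, v ∈ (e : Sym2 V) ∧ v ∈ (f : Sym2 V)
    | _, _ => False
  symm := by
    constructor
    rintro (u | e) (v | f) h
    · exact h.elim
    · exact h
    · exact h
    · obtain ⟨hne, w, h1, h2⟩ := h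
      exact ⟨hne.symm, w, h2, h1⟩
  loopless := by
    constructor
    rintro (u | e) h
    · exact h
    · exact h.1 rfl

/-- Total graph. -/
def total (G : SimpleGraph V) : SimpleGraph (V ⊕ G.edgeSet) where
  Adj x y :=
    match x, y with
    | Sum.inl u, Sum.inl v => G.Adj u v
    | Sum.inl u, Sum.inr e => u ∈ (e : Sym2 V)
    | Sum.inr e, Sum.inl u => u ∈ (e : Sym2 V)
    | Sum.inr e, Sum.inr f => e ≠ f ∧ ∃ v, v ∈ (e : Sym2 V) ∧ v ∈ (f : Sym2 V)
  symm := by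
    constructor
    rintro (u | e) (v | f) h
    · exact G.symm.symm _ _ h
    · exact h
    · exact h
    · obtain ⟨hne, w, h1, h2⟩ := h
      exact ⟨hne.symm, w, h2, h1⟩
  loopless := by
    constructor
    rintro (u | e) h
    · exact G.loopless.irrefl u h
    · exact h.1 rfl

/-- Paraline graph: line graph of the subdivision graph. -/
def paraline (G : SimpleGraph V) : SimpleGraph (subdivision G).edgeSet :=
  (subdivision G).lineGraph


/-! An edge `uv` of `G` meets `d(u) - 1` other edges at `u` and `d(v) - 1` at `v`, and no edge
other than `uv` passes through both, so its degree in `L(G)` is `d(u) + d(v) - 2`. Expanding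
`(d(u) + d(v) - 2)²` and summing over the edges, the terms `d(u)² + d(v)²` and `d(u) + d(v)` are
edge sums of the form `g(u) + g(v)`, and such a sum equals `∑ᵥ d(v) g(v)`: both count
`g(fst)` over the darts of `G`. This gives `F(G)` and `M₁(G)`. -/

section EdgeSums

variable {M : Type*} [AddCommMonoid M] (G : SimpleGraph V) (g : V → M)

lemma sum_dart_fst_eq_sum_degree_smul : ∑ d : G.Dart, g d.fst = ∑ v, G.degree v • g v := by
  rw [← sum_fiberwise univ (fun d : G.Dart => d.fst)]
  refine sum_congr rfl fun v _ => ?_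
  rw [sum_congr rfl fun d hd => congrArg g (mem_filter.1 hd).2, sum_const]
  congr 1
  convert G.dart_fst_fiber_card_eq_degree v

lemma sum_dart_fst_eq_sum_edgeFinset :
    ∑ d : G.Dart, g d.fst =
      ∑ e ∈ G.edgeFinset, Sym2.lift ⟨fun u v => g u + g v, fun _ _ => add_comm _ _⟩ e := by
  rw [← sum_fiberwise_of_maps_to (g := Dart.edge) (t := G.edgeFinset)
    fun d _ => mem_edgeFinset.2 d.edge_mem]
  refine sum_congr rfl fun e he => ?_
  induction e with
  | h u v =>
    let d : G.Dart := ⟨(u, v), mem_edgeFinset.1 he⟩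
    rw [show s(u, v) = d.edge from rfl, Dart.edge_fiber, sum_pair d.symm_ne.symm]
    rfl

lemma sum_edgeFinset_lift_add :
    ∑ e ∈ G.edgeFinset, Sym2.lift ⟨fun u v => g u + g v, fun _ _ => add_comm _ _⟩ e =
      ∑ v, G.degree v • g v := by
  rw [← sum_dart_fst_eq_sum_edgeFinset, sum_dart_fst_eq_sum_degree_smul]

end EdgeSums

lemma map_subtype_lineGraph_neighborFinset (G : SimpleGraph V) {u v : V} (h : G.Adj u v) :
    (G.lineGraph.neighborFinset ⟨s(u, v), h⟩).map (Function.Embedding.subtype _) =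
      (G.incidenceFinset u).erase s(u, v) ∪ (G.incidenceFinset v).erase s(u, v) := by
  ext f
  simp only [mem_map, mem_neighborFinset, lineGraph_adj_iff_exists, Function.Embedding.coe_subtype,
    Subtype.exists, ne_eq, mem_union, mem_erase, mem_incidenceFinset, incidenceSet]
  grind

lemma lineGraph_degree_add_two (G : SimpleGraph V) {u v : V} (h : G.Adj u v) :
    G.lineGraph.degree ⟨s(u, v), h⟩ + 2 = G.degree u + G.degree v := by
  have hu : s(u, v) ∈ G.incidenceFinset u := by simpa using h
  have hv : s(u, v) ∈ G.incidenceFinset v := by simpa [mk'_mem_incidenceSet_right_iff] using h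
  have hdisj :
      Disjoint ((G.incidenceFinset u).erase s(u, v)) ((G.incidenceFinset v).erase s(u, v)) :=
    disjoint_left.2 fun f hfu hfv => (mem_erase.1 hfu).1 <|
      G.incidenceSet_inter_incidenceSet_subset h.ne
        ⟨(mem_incidenceFinset _ _ _).1 (mem_of_mem_erase hfu),
          (mem_incidenceFinset _ _ _).1 (mem_of_mem_erase hfv)⟩
  rw [← card_neighborFinset_eq_degree, ← card_map (Function.Embedding.subtype _),
    map_subtype_lineGraph_neighborFinset G h, card_union_of_disjoint hdisj,
    ← card_incidenceFinset_eq_degree, ← card_incidenceFinset_eq_degree,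
    ← card_erase_add_one hu, ← card_erase_add_one hv]
  ring

lemma d_lineGraph (G : SimpleGraph V) {u v : V} (h : G.Adj u v) :
    d G.lineGraph ⟨s(u, v), h⟩ = d G u + d G v - 2 := by
  have := congrArg (Nat.cast : ℕ → ℤ) (lineGraph_degree_add_two G h)
  push_cast at this
  rw [d, d, d]
  linarith

lemma M1_lineGraph (G : SimpleGraph V) :
    M1 G.lineGraph = edgeSum G (fun u v => (d G u + d G v - 2) ^ 2) (fun _ _ => by ring) := by
  rw [M1, edgeSum, sum_subtype G.edgeFinset fun _ => mem_edgeFinset]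
  refine sum_congr rfl fun ⟨e, he⟩ _ => ?_
  induction e with
  | h u v => rw [d_lineGraph G he, Sym2.lift_mk]

lemma edgeSum_add_eq_sum_d_mul (G : SimpleGraph V) (g : V → ℤ) :
    edgeSum G (fun u v => g u + g v) (fun _ _ => add_comm _ _) = ∑ v, d G v * g v := by
  simp only [edgeSum, sum_edgeFinset_lift_add, nsmul_eq_mul, d]

theorem stmt9 {V : Type*} [Fintype V] (G : SimpleGraph V) :
    M1 G.lineGraph = F G - 4 * M1 G + 2 * M2 G + 4 * m G :=
  calc M1 G.lineGraph
      = edgeSum G (fun u v => (d G u + d G v - 2) ^ 2) (fun _ _ => by ring) := M1_lineGraph G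
    _ = edgeSum G (fun u v => d G u ^ 2 + d G v ^ 2) (fun _ _ => add_comm _ _) + 2 * M2 G
          - 4 * edgeSum G (fun u v => d G u + d G v) (fun _ _ => add_comm _ _) + 4 * m G := by
      simp only [edgeSum, M2, m, mul_sum, card_eq_sum_ones, Nat.cast_sum, ← sum_sub_distrib,
        ← sum_add_distrib]
      refine sum_congr rfl fun e _ => ?_
      induction e with
      | h u v => simp only [Sym2.lift_mk]; push_cast; ring
    _ = F G - 4 * M1 G + 2 * M2 G + 4 * m G := by
      rw [edgeSum_add_eq_sum_d_mul, edgeSum_add_eq_sum_d_mul]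
      simp only [F, M1, ← pow_succ', ← sq]
      ring

end Paper
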